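/- Let G be a (second countable) Lie group with left Haar measure dg, and let F be a countable set of continuous complex-valued functions on G. Then there exists a tame measure dμ on G such that for all g₁, g₂ ∈ G and every f ∈ F, the function h ↦ f(g₂⁻¹ h g₁) belongs to L²(G, dμ). -/

import Mathlib

open MeasureTheory Matrix
open scoped ENNReal ComplexConjugate Manifold

namespace HolFourier

variable (E : Type*) [NormedAddCommGroup E] [NormedSpace ℂ E]
variable {G : Type*} [TopologicalSpace G] [ChartedSpace E G] [Group G]
  [LieGroup 𝓘(ℂ, E) (⊤ : ℕ∞) G]

/-- A function on a complex Lie group (modelled on the complex normed space `E`)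
is holomorphic if it is `ℂ`-differentiable in charts. -/
def Holomorphic (f : G → ℂ) : Prop := MDifferentiable 𝓘(ℂ, E) 𝓘(ℂ, ℂ) f

variable [MeasurableSpace G] [BorelSpace G]

/-- A measure on a Lie group is tame if it is a left Haar measure times a density which is
measurable and locally bounded from below. -/
def IsTame (ν : Measure G) : Prop :=
  ∃ dg : Measure G, dg.IsHaarMeasure ∧ ∃ d : G → ℝ≥0∞, Measurable d ∧
    ν = dg.withDensity d ∧
    ∀ x : G, ∃ δ : ℝ≥0∞, 0 < δ ∧ ∃ U ∈ nhds x, ∀ᵐ y ∂dg, y ∈ U → δ ≤ d y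

/-- Matrix element `π_{ij}` of a finite-dimensional (matrix) representation,
with respect to the fixed (orthonormal) basis. -/
def matrixCoeff {n : ℕ} (π : G →* GL (Fin n) ℂ) (i j : Fin n) : G → ℂ :=
  fun g => (π g : Matrix (Fin n) (Fin n) ℂ) i j

/-- A finite-dimensional representation is holomorphic if all its matrix elements are. -/
def IsHolomorphicRep {n : ℕ} (π : G →* GL (Fin n) ℂ) : Prop :=
  ∀ i j : Fin n, Holomorphic E (matrixCoeff π i j)

/-- A submodule invariant under a representation. -/
def IsInvariantSubmodule {n : ℕ} (π : G →* GL (Fin n) ℂ)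
    (p : Submodule ℂ (Fin n → ℂ)) : Prop :=
  ∀ g : G, ∀ v ∈ p, (π g : Matrix (Fin n) (Fin n) ℂ).mulVec v ∈ p

/-- Complete reducibility: every invariant subspace has an invariant complement. -/
def IsCompletelyReducibleRep {n : ℕ} (π : G →* GL (Fin n) ℂ) : Prop :=
  ∀ p : Submodule ℂ (Fin n → ℂ), IsInvariantSubmodule π p →
    ∃ q : Submodule ℂ (Fin n → ℂ), IsInvariantSubmodule π q ∧ IsCompl p q

/-- Irreducibility of a representation. -/
def IsIrreducibleRep {n : ℕ} (π : G →* GL (Fin n) ℂ) : Prop :=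
  0 < n ∧ ∀ p : Submodule ℂ (Fin n → ℂ), IsInvariantSubmodule π p → p = ⊥ ∨ p = ⊤

/-- A complex Lie group is reductive if it admits a faithful finite-dimensional
holomorphic representation and every finite-dimensional holomorphic representation
is completely reducible. -/
def IsReductive (G : Type*) [TopologicalSpace G] [ChartedSpace E G] [Group G]
    [LieGroup 𝓘(ℂ, E) (⊤ : ℕ∞) G] : Prop :=
  (∃ (n : ℕ) (π : G →* GL (Fin n) ℂ), IsHolomorphicRep E π ∧ Function.Injective π) ∧
  ∀ (n : ℕ) (π : G →* GL (Fin n) ℂ), IsHolomorphicRep E π → IsCompletelyReducibleRep π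

/-- A maximal compact subgroup. -/
def IsMaximalCompact (K : Subgroup G) : Prop :=
  IsCompact (K : Set G) ∧
  ∀ K' : Subgroup G, IsCompact (K' : Set G) → K ≤ K' → K' = K

/-- The restriction of `π` to `K` is unitary (with respect to the standard inner
product on `Fin n → ℂ`, i.e. the fixed orthonormal basis). -/
def UnitaryOnK (K : Subgroup G) {n : ℕ} (π : G →* GL (Fin n) ℂ) : Prop :=
  ∀ x ∈ K, (π x : Matrix (Fin n) (Fin n) ℂ) ∈ Matrix.unitaryGroup (Fin n) ℂ

/-- The squared Hilbert–Schmidt norm `‖π(g)‖² = tr (π(g) π(g)*) = Σ_{ij} |π_{ij}(g)|²`. -/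
noncomputable def repNormSq {n : ℕ} (π : G →* GL (Fin n) ℂ) (g : G) : ℝ :=
  ∑ i : Fin n, ∑ j : Fin n, ‖(π g : Matrix (Fin n) (Fin n) ℂ) i j‖ ^ 2

/-- The constant `C_{π,μ} = ∫_G ‖π(g)‖² dμ(g)`. -/
noncomputable def Cconst {n : ℕ} (π : G →* GL (Fin n) ℂ) (μ : Measure G) : ℝ :=
  ∫ g, repNormSq π g ∂μ

/-- `K`-bi-invariance of a measure. -/
def IsKBiInvariant (K : Subgroup G) (μ : Measure G) : Prop :=
  ∀ k ∈ K, Measure.map (fun g => k * g) μ = μ ∧ Measure.map (fun g => g * k) μ = μ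

/-- A `K`-admissible measure: tame, `K`-bi-invariant, and such that all irreducible
holomorphic representations (unitary on `K`) are square-integrable. -/
def IsKAdmissible (K : Subgroup G) (μ : Measure G) : Prop :=
  IsTame μ ∧ IsKBiInvariant K μ ∧
  ∀ (n : ℕ) (π : G →* GL (Fin n) ℂ), IsHolomorphicRep E π → IsIrreducibleRep π →
    UnitaryOnK K π → Integrable (repNormSq π) μ

/-- Membership in `HL²(G, dμ)`: holomorphic and square-integrable. -/
def MemHL2 (f : G → ℂ) (μ : Measure G) : Prop :=
  Holomorphic E f ∧ MemLp f 2 μ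

/-- Bundled finite-dimensional matrix representations of `G`. -/
abbrev RepBundle (G : Type*) [Group G] : Type _ := Σ n : ℕ, G →* GL (Fin n) ℂ

/-- Equivalence of two finite-dimensional representations. -/
def RepEquiv {n m : ℕ} (π : G →* GL (Fin n) ℂ) (π' : G →* GL (Fin m) ℂ) : Prop :=
  ∃ T : (Fin n → ℂ) ≃ₗ[ℂ] (Fin m → ℂ), ∀ (g : G) (v : Fin n → ℂ),
    T ((π g : Matrix (Fin n) (Fin n) ℂ).mulVec v)
      = (π' g : Matrix (Fin m) (Fin m) ℂ).mulVec (T v)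

/-- `R` is a system of representatives of the equivalence classes of the
finite-dimensional irreducible holomorphic representations of `G` (unitary on `K`). -/
def IsRepSystem (K : Subgroup G) (R : Set (RepBundle G)) : Prop :=
  (∀ σ ∈ R, IsHolomorphicRep E σ.2 ∧ IsIrreducibleRep σ.2 ∧ UnitaryOnK K σ.2) ∧
  (∀ σ ∈ R, ∀ τ ∈ R, RepEquiv σ.2 τ.2 → σ = τ) ∧
  ∀ (n : ℕ) (π : G →* GL (Fin n) ℂ), IsHolomorphicRep E π → IsIrreducibleRep π →
    UnitaryOnK K π → ∃ σ ∈ R, RepEquiv π σ.2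

/-- The holomorphic Fourier transform `f̂(π) = C_{π,μ}⁻¹ ∫_G f(g) π(g)* dμ(g)`,
written entrywise: `(π(g)*)_{ij} = conj (π_{ji}(g))`. -/
noncomputable def fourierTransform (f : G → ℂ) {n : ℕ} (π : G →* GL (Fin n) ℂ)
    (μ : Measure G) : Matrix (Fin n) (Fin n) ℂ :=
  Matrix.of fun i j =>
    ((Cconst π μ : ℝ) : ℂ)⁻¹ * ∫ g, f g * (starRingEnd ℂ) (matrixCoeff π j i g) ∂μ

/-- The (unordered) series `Σ_{σ ∈ R} T σ` converges locally uniformly on `G` to `f`: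
for every compact `X ⊆ G` and `ε > 0` there is a finite subset `s₀` of `R` such that all
finite partial sums over finite `s` with `s₀ ⊆ s ⊆ R` are uniformly within `ε` of `f` on `X`. -/
def SumsLocallyUniformlyTo {ι : Type*} (R : Set ι) (T : ι → G → ℂ) (f : G → ℂ) : Prop :=
  ∀ X : Set G, IsCompact X → ∀ ε : ℝ, 0 < ε → ∃ s₀ : Finset ι, ↑s₀ ⊆ R ∧
    ∀ s : Finset ι, s₀ ⊆ s → ↑s ⊆ R → ∀ g ∈ X, ‖(∑ σ ∈ s, T σ g) - f g‖ < ε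

/-! Exhaust `G` by compact sets `K n`. As `(K n)⁻¹ * K n * K n` is compact, a single sequence
`M n` bounds on `K n`, for all large `n`, every two-sided translate of every member of `F`
(enumerated by `ℕ`). A density equal to a constant `c n > 0` on the `n`-th shell of the
exhaustion, with `∑ c n (1 + M n ^ 2) |K n| < ∞`, is then locally bounded below, and it makes
all these translates square integrable against Haar measure. -/

open Filter Topology
open scoped Pointwise NNReal

section CompactExhaustion

variable {X : Type*} [TopologicalSpace X] (K : CompactExhaustion X)

theorem _root_.CompactExhaustion.exists_mem_interior (x : X) : ∃ n, x ∈ interior (K n) :=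
  let ⟨n, hn⟩ := K.exists_mem x
  ⟨n + 1, K.subset_interior_succ n hn⟩

open scoped Classical in
/-- Unlike `CompactExhaustion.find`, this index has open sublevel sets, so it is measurable
without any separation assumption on `X`. -/
protected noncomputable def _root_.CompactExhaustion.findInterior (x : X) : ℕ :=
  Nat.find (K.exists_mem_interior x)

open scoped Classical in
theorem _root_.CompactExhaustion.findInterior_le_iff {x : X} {n : ℕ} :
    K.findInterior x ≤ n ↔ x ∈ interior (K n) :=
  ⟨fun h => interior_mono (K.subset h) (Nat.find_spec (K.exists_mem_interior x)),
    fun h => Nat.find_le h⟩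

theorem _root_.CompactExhaustion.mem_findInterior (x : X) : x ∈ K (K.findInterior x) :=
  interior_subset (K.findInterior_le_iff.1 le_rfl)

theorem _root_.CompactExhaustion.eventually_findInterior_le (x : X) :
    ∀ᶠ y in 𝓝 x, K.findInterior y ≤ K.findInterior x :=
  mem_of_superset (isOpen_interior.mem_nhds (K.findInterior_le_iff.1 le_rfl))
    fun _ hy => K.findInterior_le_iff.2 hy

variable [MeasurableSpace X] [OpensMeasurableSpace X]

theorem _root_.CompactExhaustion.measurable_findInterior : Measurable K.findInterior :=
  measurable_of_Iic fun n => by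
    simp only [Set.preimage, Set.mem_Iic, CompactExhaustion.findInterior_le_iff,
      Set.ofPred_mem_eq]
    exact isOpen_interior.measurableSet

theorem _root_.CompactExhaustion.lintegral_mul_findInterior_le (ν : Measure X)
    (c : ℕ → ℝ≥0∞) {ψ : X → ℝ≥0∞} {B : ℕ → ℝ≥0∞} (hψ : ∀ n, ∀ x ∈ K n, ψ x ≤ B n) :
    ∫⁻ x, c (K.findInterior x) * ψ x ∂ν ≤ ∑' n, c n * B n * ν (K n) := by
  have hS_meas : ∀ n, MeasurableSet (K.findInterior ⁻¹' {n}) :=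
    fun n => K.measurable_findInterior (measurableSet_singleton n)
  have hS_sub : ∀ n, K.findInterior ⁻¹' {n} ⊆ K n :=
    fun n x (hx : K.findInterior x = n) => hx ▸ K.mem_findInterior x
  calc ∫⁻ x, c (K.findInterior x) * ψ x ∂ν
      = ∑' n, ∫⁻ x in K.findInterior ⁻¹' {n}, c (K.findInterior x) * ψ x ∂ν := by
        rw [← setLIntegral_univ, ← Set.preimage_univ (f := K.findInterior),
          ← Set.iUnion_of_singleton, Set.preimage_iUnion,
          lintegral_iUnion hS_meas (pairwise_disjoint_fiber _)]
    _ ≤ ∑' n, ∫⁻ _ in K.findInterior ⁻¹' {n}, c n * B n ∂ν := by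
        refine ENNReal.tsum_le_tsum fun n => setLIntegral_mono' (hS_meas n) fun x hx => ?_
        rw [show K.findInterior x = n from hx]
        exact mul_le_mul_right (hψ n x (hS_sub n hx)) _
    _ ≤ ∑' n, c n * B n * ν (K n) := by
        simp only [setLIntegral_const]
        exact ENNReal.tsum_le_tsum fun n => mul_le_mul_right (measure_mono (hS_sub n)) _

theorem _root_.CompactExhaustion.exists_weight_lintegral_mul_lt_top (ν : Measure X)
    [IsFiniteMeasureOnCompacts ν] (M : ℕ → ℝ≥0) :
    ∃ w : X → ℝ≥0∞, Measurable w ∧ (∀ x, ∃ δ, 0 < δ ∧ ∀ᶠ y in 𝓝 x, δ ≤ w y) ∧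
      ∀ ψ : X → ℝ≥0∞, (∀ᶠ n in atTop, ∀ x ∈ K n, ψ x ≤ M n) → ∫⁻ x, w x * ψ x ∂ν < ∞ := by
  obtain ⟨c, hc_pos, hc_sum⟩ := ENNReal.exists_pos_tsum_mul_lt_of_countable one_ne_zero
    (fun n => (1 + M n) * ν (K n))
    fun n => ENNReal.mul_ne_top (by simp) (K.isCompact n).measure_lt_top.ne
  refine ⟨fun x => c (K.findInterior x),
    measurable_coe_nnreal_ennreal.comp (measurable_from_top.comp K.measurable_findInterior),
    fun x => ?_, fun ψ hψ => ?_⟩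
  · obtain ⟨m, -, hm⟩ := (Finset.range (K.findInterior x + 1)).exists_min_image c
      ⟨0, Finset.mem_range.2 (Nat.succ_pos _)⟩
    refine ⟨c m, ENNReal.coe_pos.2 (hc_pos m), ?_⟩
    filter_upwards [K.eventually_findInterior_le x] with y hy
    exact ENNReal.coe_le_coe.2 (hm _ (Finset.mem_range.2 (Nat.lt_succ_of_le hy)))
  obtain ⟨N, hN⟩ := eventually_atTop.1 hψ
  -- Below `N` the domination by `M` may fail, but `ψ ≤ M N` there since the `K n` increase.
  have hψ_le : ∀ n, ∀ x ∈ K n, ψ x ≤ (1 + M N) * (1 + M n) := by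
    intro n x hx
    have hψ_le_add : ψ x ≤ M n + M N := by
      rcases le_total N n with h | h
      · exact (hN n h x hx).trans le_self_add
      · exact (hN N le_rfl x (K.subset h hx)).trans le_add_self
    calc ψ x ≤ M n + M N := hψ_le_add
      _ ≤ (1 + M N) * (1 + M n) := by
        rw [add_mul, one_mul, mul_one_add]
        exact add_le_add le_add_self le_self_add
  calc ∫⁻ x, c (K.findInterior x) * ψ x ∂ν
      ≤ ∑' n, c n * ((1 + M N) * (1 + M n)) * ν (K n) :=
        K.lintegral_mul_findInterior_le ν _ hψ_le
    _ = (1 + M N) * ∑' n, (1 + M n) * ν (K n) * c n := by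
        rw [← ENNReal.tsum_mul_left]
        exact tsum_congr fun n => by ring
    _ < ∞ := ENNReal.mul_lt_top (by simp) (hc_sum.trans ENNReal.one_lt_top)

end CompactExhaustion

theorem _root_.MeasureTheory.memLp_two_withDensity_of_lintegral_lt_top {X E : Type*}
    [MeasurableSpace X] [NormedAddCommGroup E] {ν : Measure X} {w : X → ℝ≥0∞} (hw : Measurable w)
    {f : X → E}
    (hf : AEStronglyMeasurable f ν) (h : ∫⁻ x, w x * ‖f x‖ₑ ^ 2 ∂ν < ∞) :
    MemLp f 2 (ν.withDensity w) := by
  refine ⟨hf.mono_ac (withDensity_absolutelyContinuous ν w), ?_⟩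
  rw [eLpNorm_lt_top_iff_lintegral_rpow_enorm_lt_top two_ne_zero ENNReal.ofNat_ne_top,
    lintegral_withDensity_eq_lintegral_mul₀ hw.aemeasurable (hf.enorm.pow_const _)]
  simpa only [ENNReal.toReal_ofNat, ENNReal.rpow_two, Pi.mul_apply] using h

/-- Once `n ≥ i` and `g₁, g₂ ∈ K n`, the translate is bounded on `K n` by the supremum of `‖e j‖`,
`j ≤ n`, over the compact set `(K n)⁻¹ * K n * K n`. -/
theorem _root_.CompactExhaustion.exists_nnnorm_twoSidedTranslate_eventually_le
    {G E : Type*} [TopologicalSpace G] [Group G] [IsTopologicalGroup G] [SeminormedAddGroup E]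
    (K : CompactExhaustion G) {e : ℕ → G → E} (he : ∀ i, Continuous (e i)) :
    ∃ M : ℕ → ℝ≥0, ∀ i (g₁ g₂ : G),
      ∀ᶠ n in atTop, ∀ x ∈ K n, ‖e i (g₂⁻¹ * x * g₁)‖₊ ≤ M n := by
  have hC : ∀ i n, ∃ C : ℝ≥0, ∀ x ∈ (K n)⁻¹ * K n * K n, ‖e i x‖₊ ≤ C := fun i n =>
    ((((K.isCompact n).inv.mul (K.isCompact n)).mul (K.isCompact n)).image
      (he i).nnnorm).bddAbove.imp fun _ hC x hx => hC ⟨x, hx, rfl⟩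
  choose C hC using hC
  refine ⟨fun n => (Finset.range (n + 1)).sup (C · n), fun i g₁ g₂ => ?_⟩
  obtain ⟨N₁, hN₁⟩ := K.exists_mem g₁
  obtain ⟨N₂, hN₂⟩ := K.exists_mem g₂
  filter_upwards [eventually_ge_atTop i, eventually_ge_atTop N₁, eventually_ge_atTop N₂]
    with n hi h₁ h₂ x hx
  have hmem : g₂⁻¹ * x * g₁ ∈ (K n)⁻¹ * K n * K n :=
    Set.mul_mem_mul (Set.mul_mem_mul (Set.inv_mem_inv.2 (K.subset h₂ hN₂)) hx) (K.subset h₁ hN₁)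
  exact (hC i n _ hmem).trans
    (Finset.le_sup (f := (C · n)) (Finset.mem_range.2 (Nat.lt_succ_of_le hi)))

theorem isTame_withDensity {G : Type*} [TopologicalSpace G] [Group G] [MeasurableSpace G]
    (ν : Measure G) [ν.IsHaarMeasure] {w : G → ℝ≥0∞} (hw : Measurable w)
    (hw_pos : ∀ x, ∃ δ, 0 < δ ∧ ∀ᶠ y in 𝓝 x, δ ≤ w y) : IsTame (ν.withDensity w) :=
  ⟨ν, inferInstance, w, hw, rfl, fun x =>
    let ⟨δ, hδ, hδx⟩ := hw_pos x
    ⟨δ, hδ, _, hδx, ae_of_all _ fun _ hy => hy⟩⟩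

theorem exists_tame_measure_for_countable_family_general
    {E' : Type*} [NormedAddCommGroup E'] [NormedSpace ℝ E']
    {G' : Type*} [TopologicalSpace G'] [ChartedSpace E' G'] [Group G']
    [LieGroup 𝓘(ℝ, E') (⊤ : ℕ∞) G'] [SecondCountableTopology G'] [LocallyCompactSpace G']
    [MeasurableSpace G'] [BorelSpace G']
    (F : Set (G' → ℂ)) (hF : F.Countable) (hFc : ∀ f ∈ F, Continuous f) :
    ∃ μ : Measure G', IsTame μ ∧
      ∀ (g₁ g₂ : G'), ∀ f ∈ F, MemLp (fun h => f (g₂⁻¹ * h * g₁)) 2 μ := by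
  have : IsTopologicalGroup G' := topologicalGroup_of_lieGroup 𝓘(ℝ, E') (⊤ : ℕ∞)
  -- `0` is added only to enumerate `F` by `ℕ` when it is empty.
  obtain ⟨e, he⟩ := (hF.insert 0).exists_eq_range (Set.insert_nonempty _ _)
  have he_cont : ∀ i, Continuous (e i) := fun i => by
    rcases (he ▸ Set.mem_range_self i : e i ∈ insert 0 F) with h | h
    exacts [h ▸ continuous_const, hFc _ h]
  let K := CompactExhaustion.choice G'
  obtain ⟨M, hM⟩ := K.exists_nnnorm_twoSidedTranslate_eventually_le he_cont
  obtain ⟨w, hw_meas, hw_pos, hw_int⟩ :=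
    K.exists_weight_lintegral_mul_lt_top Measure.haar (fun n => M n ^ 2)
  refine ⟨_, isTame_withDensity Measure.haar hw_meas hw_pos, fun g₁ g₂ f hf => ?_⟩
  obtain ⟨i, rfl⟩ : f ∈ Set.range e := he ▸ Set.mem_insert_of_mem _ hf
  have hφ : Continuous fun h => e i (g₂⁻¹ * h * g₁) := (he_cont i).comp (by fun_prop)
  refine memLp_two_withDensity_of_lintegral_lt_top hw_meas hφ.aestronglyMeasurable
    (hw_int _ ?_)
  filter_upwards [hM i g₁ g₂] with n hn x hx
  rw [ENNReal.coe_pow, enorm_eq_nnnorm]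
  gcongr
  exact_mod_cast hn x hx

/-- For a (second countable) Lie group `G'` with a countable family `F` of
continuous functions, there is a tame measure `μ` such that all two-sided translates
`h ↦ f (g₂⁻¹ * h * g₁)` of members of `F` are in `L²(G', μ)`. -/
theorem exists_tame_measure_for_countable_family
    {E' : Type*} [NormedAddCommGroup E'] [NormedSpace ℝ E'] [FiniteDimensional ℝ E']
    {G' : Type*} [TopologicalSpace G'] [ChartedSpace E' G'] [Group G']
    [LieGroup 𝓘(ℝ, E') (⊤ : ℕ∞) G'] [SecondCountableTopology G'] [LocallyCompactSpace G']
    [MeasurableSpace G'] [BorelSpace G']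
    (F : Set (G' → ℂ)) (hF : F.Countable) (hFc : ∀ f ∈ F, Continuous f) :
    ∃ μ : Measure G', IsTame μ ∧
      ∀ (g₁ g₂ : G'), ∀ f ∈ F, MemLp (fun h => f (g₂⁻¹ * h * g₁)) 2 μ :=
  exists_tame_measure_for_countable_family_general (E' := E') F hF hFc

end HolFourier
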